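/- arXiv:2402.04237 — 4 statements merged into one kernel-verified Lean document; each statement's English description precedes it below -/
import Mathlib

section
/- Let G and G' be finite simple graphs, each on n vertices, and let k be a natural number with k > 3n². If the k-colouring graphs C_k(G) and C_k(G') are isomorphic, then G and G' have the same degree sequence; that is, the multiset of vertex degrees of G equals the multiset of vertex degrees of G'. -/
open SimpleGraph

/-- The `k`-colouring graph of `G`: vertices are proper `k`-colourings of `G`,
two colourings being adjacent iff they differ at exactly one vertex. -/
def colGraph {V : Type*} (G : SimpleGraph V) (k : ℕ) :
    SimpleGraph (G.Coloring (Fin k)) where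
  Adj c c' := ∃! v, c v ≠ c' v
  symm := by
    constructor
    rintro c c' ⟨v, hv, hu⟩
    exact ⟨v, hv.symm, fun w hw => hu w hw.symm⟩
  loopless := by
    constructor
    rintro c ⟨v, hv, -⟩
    exact hv rfl

/-- The generalised chromatic polynomial `π_G^(H)(k)`: the number of vertex subsets of
the `k`-colouring graph of `G` that induce a subgraph isomorphic to `H`. -/
noncomputable def piHG {V W : Type*} (G : SimpleGraph V) (H : SimpleGraph W) (k : ℕ) : ℕ :=
  Nat.card {S : Set (G.Coloring (Fin k)) //
    Nonempty (((colGraph G k).induce S) ≃g H)}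

/-!
The neighbours of a colouring `c` in `C_k(G)` are partitioned according to the vertex they
recolour, and two neighbours recolour the same vertex iff they are equal or adjacent, so this
partition is determined by the graph `C_k(G)` alone. The part belonging to `v` is in bijection
with the colours missing from `c` on the closed neighbourhood of `v`, so it has
`k - 1 - |c(N(v))|` elements: exactly `k - 1 - deg v` when `c` is injective, and at least
`k - 1 - deg v` in general. Transporting the parts of an injective colouring of `G` along an
isomorphism `C_k(G) ≃ C_k(G')` gives a bijection `E : V ≃ V'` with `deg v ≤ deg (E v)`; the
inverse isomorphism gives such a bijection in the other direction, so the degree sums agree and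
all these inequalities are equalities.
-/

open Finset

theorem Function.Surjective.exists_equiv_card_fiber_eq {α β ι κ : Type*}
    {f : α → ι} {g : β → κ}
    (hf : f.Surjective) (hg : g.Surjective) (e : α ≃ β)
    (he : ∀ x y, g (e x) = g (e y) ↔ f x = f y) :
    ∃ E : ι ≃ κ, ∀ i, Nat.card {x // f x = i} = Nat.card {y // g y = E i} := by
  choose s hs using hf
  have hgs : ∀ x, g (e (s (f x))) = g (e x) := fun x => (he _ _).mpr (hs _)
  let E : ι ≃ κ := Equiv.ofBijective (fun i => g (e (s i)))
    ⟨fun i j hij => by simpa only [hs] using (he _ _).mp hij, fun j => by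
      obtain ⟨y, rfl⟩ := hg j
      exact ⟨f (e.symm y), by simpa using hgs (e.symm y)⟩⟩
  refine ⟨E, fun i => Nat.card_congr (e.subtypeEquiv fun x => ?_)⟩
  change f x = i ↔ g (e x) = g (e (s i))
  rw [he, hs]

theorem Multiset.map_univ_eq_of_le_of_le {α β M : Type*} [Fintype α] [Fintype β]
    [AddCommMonoid M] [PartialOrder M] [IsOrderedCancelAddMonoid M] {f : α → M} {g : β → M}
    (e : α ≃ β) (e' : β ≃ α) (he : ∀ a, f a ≤ g (e a)) (he' : ∀ b, g b ≤ f (e' b)) :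
    univ.val.map f = univ.val.map g := by
  have hsum : ∑ a, f a = ∑ a, g (e a) := by
    refine le_antisymm (sum_le_sum fun a _ => he a) ?_
    calc ∑ a, g (e a) = ∑ b, g b := e.sum_comp g
      _ ≤ ∑ b, f (e' b) := sum_le_sum fun b _ => he' b
      _ = ∑ a, f a := e'.sum_comp f
  have hfg := (sum_eq_sum_iff_of_le fun a _ => he a).mp hsum
  rw [← Multiset.map_univ_val_equiv e, Multiset.map_map]
  exact Multiset.map_congr rfl fun a _ => hfg a (mem_univ a)

theorem SimpleGraph.exists_injective_coloring {V α : Type*} [Fintype V] [Fintype α]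
    (G : SimpleGraph V) (h : Fintype.card V ≤ Fintype.card α) :
    ∃ c : G.Coloring α, Function.Injective c := by
  obtain ⟨f⟩ := Function.Embedding.nonempty_of_card_le h
  exact ⟨G.recolorOfEmbedding f G.selfColoring, f.injective⟩

namespace colGraph

variable {V : Type*} {G : SimpleGraph V} {k : ℕ}

theorem adj_iff {c x : G.Coloring (Fin k)} : (colGraph G k).Adj c x ↔ ∃! v, c v ≠ x v :=
  Iff.rfl

noncomputable def recolouredVertex (c : G.Coloring (Fin k)) (x : (colGraph G k).neighborSet c) :
    V :=
  (adj_iff.mp x.2).exists.choose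

variable {c : G.Coloring (Fin k)} {x y : (colGraph G k).neighborSet c} {u v : V}

theorem apply_recolouredVertex_ne : c (recolouredVertex c x) ≠ x.1 (recolouredVertex c x) :=
  (adj_iff.mp x.2).exists.choose_spec

theorem recolouredVertex_eq_of_apply_ne (hv : c v ≠ x.1 v) : recolouredVertex c x = v :=
  (adj_iff.mp x.2).unique apply_recolouredVertex_ne hv

theorem apply_eq_of_ne_recolouredVertex (hu : u ≠ recolouredVertex c x) : x.1 u = c u :=
  not_not.mp fun h => hu (recolouredVertex_eq_of_apply_ne (Ne.symm h)).symm

theorem recolouredVertex_eq_iff :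
    recolouredVertex c x = recolouredVertex c y ↔ x = y ∨ (colGraph G k).Adj x y := by
  constructor
  · intro hxy
    have hagree : ∀ u, u ≠ recolouredVertex c y → x.1 u = y.1 u := fun u hu =>
      (apply_eq_of_ne_recolouredVertex (hxy ▸ hu)).trans (apply_eq_of_ne_recolouredVertex hu).symm
    by_cases hv : x.1 (recolouredVertex c y) = y.1 (recolouredVertex c y)
    · left
      ext u
      by_cases hu : u = recolouredVertex c y
      · rw [hu, hv]
      · rw [hagree u hu]
    · exact Or.inr ⟨_, hv, fun u hu => by_contra fun h => hu (hagree u h)⟩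
  · rintro (rfl | ⟨w, -, hw⟩)
    · rfl
    by_contra hne
    have hx : x.1 (recolouredVertex c x) ≠ y.1 (recolouredVertex c x) := by
      rw [apply_eq_of_ne_recolouredVertex hne]
      exact apply_recolouredVertex_ne.symm
    have hy : x.1 (recolouredVertex c y) ≠ y.1 (recolouredVertex c y) := by
      rw [apply_eq_of_ne_recolouredVertex (Ne.symm hne)]
      exact apply_recolouredVertex_ne
    exact hne ((hw _ hx).trans (hw _ hy).symm)

section Fintype

variable [Fintype V] [DecidableRel G.Adj]

def freshColours (c : G.Coloring (Fin k)) (v : V) : Finset (Fin k) :=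
  (insert (c v) ((G.neighborFinset v).image c))ᶜ

theorem mem_freshColours {a : Fin k} :
    a ∈ freshColours c v ↔ a ≠ c v ∧ ∀ u, G.Adj v u → c u ≠ a := by
  simp [freshColours]

theorem card_freshColours : #(freshColours c v) = k - 1 - #((G.neighborFinset v).image c) := by
  have hcv : c v ∉ (G.neighborFinset v).image c := by
    simpa using fun _ hu => c.valid hu.symm
  rw [freshColours, card_compl, card_insert_of_notMem hcv, Fintype.card_fin]
  omega

section Recolour

variable [DecidableEq V]

def recolour (c : G.Coloring (Fin k)) (v : V) (a : freshColours c v) : G.Coloring (Fin k) :=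
  Coloring.mk (Function.update c v a) fun {u w} huw => by
    have ha := (mem_freshColours.mp a.2).2
    simp only [Function.update_apply]
    split_ifs with hu hw hw
    · exact absurd (hu.trans hw.symm) (G.ne_of_adj huw)
    · exact fun h => ha w (hu ▸ huw) h.symm
    · exact ha u (hw ▸ huw.symm)
    · exact c.valid huw

@[simp]
theorem recolour_apply (a : freshColours c v) (u : V) :
    recolour c v a u = Function.update c v a u := rfl

theorem recolour_mem_neighborSet (a : freshColours c v) :
    recolour c v a ∈ (colGraph G k).neighborSet c := by
  have hav : c v ≠ a := (mem_freshColours.mp a.2).1.symm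
  refine ⟨v, by simpa using hav, fun u hu => by_contra fun huv => hu ?_⟩
  simp [Function.update_of_ne huv]

noncomputable def fiberEquivFreshColours (c : G.Coloring (Fin k)) (v : V) :
    {x : (colGraph G k).neighborSet c // recolouredVertex c x = v} ≃ freshColours c v where
  toFun x := ⟨x.1.1 v, by
    obtain ⟨x, rfl⟩ := x
    refine mem_freshColours.mpr ⟨fun h => apply_recolouredVertex_ne h.symm, fun u hu h => ?_⟩
    rw [← apply_eq_of_ne_recolouredVertex (G.ne_of_adj hu).symm] at h
    exact x.1.valid hu h.symm⟩
  invFun a := ⟨⟨recolour c v a, recolour_mem_neighborSet a⟩,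
    recolouredVertex_eq_of_apply_ne (by simpa using (mem_freshColours.mp a.2).1.symm)⟩
  left_inv := by
    rintro ⟨x, rfl⟩
    ext u
    rcases eq_or_ne u (recolouredVertex c x) with rfl | hu
    · simp
    · simp [Function.update_of_ne hu, apply_eq_of_ne_recolouredVertex hu]
  right_inv a := by ext; simp

end Recolour

theorem card_fiber_recolouredVertex (c : G.Coloring (Fin k)) (v : V) :
    Nat.card {x : (colGraph G k).neighborSet c // recolouredVertex c x = v} =
      k - 1 - #((G.neighborFinset v).image c) := by
  classical
  rw [Nat.card_congr (fiberEquivFreshColours c v), Nat.card_eq_finsetCard, card_freshColours]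

theorem sub_degree_le_card_fiber_recolouredVertex (c : G.Coloring (Fin k)) (v : V) :
    k - 1 - G.degree v ≤
      Nat.card {x : (colGraph G k).neighborSet c // recolouredVertex c x = v} := by
  rw [card_fiber_recolouredVertex, ← card_neighborFinset_eq_degree]
  exact Nat.sub_le_sub_left card_image_le _

theorem card_fiber_recolouredVertex_of_injective (hc : Function.Injective c) (v : V) :
    Nat.card {x : (colGraph G k).neighborSet c // recolouredVertex c x = v} =
      k - 1 - G.degree v := by
  rw [card_fiber_recolouredVertex, card_image_of_injective _ hc, card_neighborFinset_eq_degree]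

theorem recolouredVertex_surjective (hk : Fintype.card V < k) (c : G.Coloring (Fin k)) :
    Function.Surjective (recolouredVertex c) := by
  intro v
  have hpos : 0 < Nat.card {x : (colGraph G k).neighborSet c // recolouredVertex c x = v} :=
    lt_of_lt_of_le (by have := G.degree_lt_card_verts v; omega)
      (sub_degree_le_card_fiber_recolouredVertex c v)
  obtain ⟨⟨x, hx⟩⟩ := (Nat.card_pos_iff.mp hpos).1
  exact ⟨x, hx⟩

end Fintype

variable {V' : Type*} {G' : SimpleGraph V'}

theorem recolouredVertex_mapNeighborSet_eq_iff (φ : colGraph G k ≃g colGraph G' k)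
    (x y : (colGraph G k).neighborSet c) :
    recolouredVertex (φ c) (φ.mapNeighborSet c x) =
        recolouredVertex (φ c) (φ.mapNeighborSet c y) ↔
      recolouredVertex c x = recolouredVertex c y := by
  simp [recolouredVertex_eq_iff, φ.map_adj_iff]

theorem exists_equiv_degree_le [Fintype V] [DecidableRel G.Adj]
    [Fintype V'] [DecidableRel G'.Adj]
    (φ : colGraph G k ≃g colGraph G' k) (hV : Fintype.card V < k) (hV' : Fintype.card V' < k) :
    ∃ E : V ≃ V', ∀ v, G.degree v ≤ G'.degree (E v) := by
  obtain ⟨c, hc⟩ := G.exists_injective_coloring (α := Fin k) (by simpa using hV.le)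
  obtain ⟨E, hE⟩ := (recolouredVertex_surjective hV c).exists_equiv_card_fiber_eq
    (recolouredVertex_surjective hV' (φ c)) (φ.mapNeighborSet c)
    (recolouredVertex_mapNeighborSet_eq_iff φ)
  refine ⟨E, fun v => ?_⟩
  have hle := sub_degree_le_card_fiber_recolouredVertex (φ c) (E v)
  rw [← hE, card_fiber_recolouredVertex_of_injective hc] at hle
  -- `G.degree v < k - 1`, so the truncated subtraction on the right of `hle` is exact.
  have := G.degree_lt_card_verts v
  omega

end colGraph

/-- For `k > 3n²`, the `k`-colouring graph determines the degree sequence of a graph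
on `n` vertices. -/
theorem colouring_graph_determines_degree_sequence {V V' : Type*} [Fintype V] [Fintype V']
    (G : SimpleGraph V) (G' : SimpleGraph V')
    [DecidableRel G.Adj] [DecidableRel G'.Adj] (n : ℕ)
    (hV : Fintype.card V = n) (hV' : Fintype.card V' = n)
    (k : ℕ) (hk : 3 * n ^ 2 < k)
    (h : Nonempty (colGraph G k ≃g colGraph G' k)) :
    (Finset.univ.val.map fun v => G.degree v) =
      (Finset.univ.val.map fun v => G'.degree v) := by
  obtain ⟨φ⟩ := h
  have hn : n < k := by nlinarith
  obtain ⟨E, hE⟩ := colGraph.exists_equiv_degree_le φ (hV ▸ hn) (hV' ▸ hn)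
  obtain ⟨E', hE'⟩ := colGraph.exists_equiv_degree_le φ.symm (hV' ▸ hn) (hV ▸ hn)
  exact Multiset.map_univ_eq_of_le_of_le E E' hE hE'
end

section
/- Let G and G' be finite simple graphs, each on n vertices, and let k be a natural number with k > 5n². If the k-colouring graphs C_k(G) and C_k(G') are isomorphic, then G and G' are isomorphic. In other words, for k > 5n² the colouring graph C_k(G) uniquely determines G up to isomorphism. -/
/-! An edge `c ~ c'` of the colouring graph recolours exactly one vertex of `G`. Fix a colouring
`c` and a colour `a` unused by `c` (it exists as `k > n`). Two neighbours of `c` recolour the same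
vertex iff they are equal or adjacent, and the neighbours `c[v ↦ a]` recolour every vertex `v`;
hence an isomorphism `φ` of colouring graphs induces a map `V → V'`, sending `v` to the vertex
recoloured along `φ c ~ φ (c[v ↦ a])`, with inverse induced by `φ⁻¹`. Adjacency is read off in the
colouring graph: if `v` and `w` are not adjacent, recolourings of `v` and of `w` commute, so two
neighbours of `c` recolouring them lie on a 4-cycle; if `v ~ w`, then `c[v ↦ a]`, `c`, `c[w ↦ a]`
is an induced path lying on no 4-cycle. -/

open SimpleGraph

section

variable {V V' W : Type*}

/-- `c₁ - c - c₂` is an induced path of `H` lying on no 4-cycle. -/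
def SimpleGraph.IsSquareFreeCherry (H : SimpleGraph W) (c c₁ c₂ : W) : Prop :=
  H.Adj c c₁ ∧ H.Adj c c₂ ∧ c₁ ≠ c₂ ∧ ¬ H.Adj c₁ c₂ ∧ ∀ x, H.Adj c₁ x → H.Adj c₂ x → x = c

lemma SimpleGraph.IsSquareFreeCherry.map {W' : Type*} {H : SimpleGraph W} {H' : SimpleGraph W'}
    (φ : H ≃g H') {c c₁ c₂ : W} (hP : H.IsSquareFreeCherry c c₁ c₂) :
    H'.IsSquareFreeCherry (φ c) (φ c₁) (φ c₂) := by
  obtain ⟨h₁, h₂, hne, hnadj, huniq⟩ := hP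
  refine ⟨φ.map_adj_iff.2 h₁, φ.map_adj_iff.2 h₂, φ.injective.ne hne,
    fun h => hnadj (φ.map_adj_iff.1 h), fun x hx₁ hx₂ => ?_⟩
  rw [← φ.apply_symm_apply x, huniq (φ.symm x) (φ.map_adj_iff.1 (by simpa using hx₁))
    (φ.map_adj_iff.1 (by simpa using hx₂))]

namespace SimpleGraph.Coloring

variable {α : Type*} {G : SimpleGraph V} [DecidableEq V]

def update (c : G.Coloring α) (v : V) (a : α) (ha : ∀ u, G.Adj v u → c u ≠ a) :
    G.Coloring α :=
  Coloring.mk (Function.update c v a) fun {x y} hxy => by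
    rcases eq_or_ne x v with rfl | hx
    · simpa [Function.update_of_ne (G.ne_of_adj hxy).symm] using (ha y hxy).symm
    rcases eq_or_ne y v with rfl | hy
    · simpa [Function.update_of_ne hx] using ha x hxy.symm
    · simpa [Function.update_of_ne hx, Function.update_of_ne hy] using c.valid hxy

variable {c : G.Coloring α} {v : V} {a : α} {ha : ∀ u, G.Adj v u → c u ≠ a}

@[simp]
lemma update_self : c.update v a ha v = a := Function.update_self ..

lemma update_of_ne {u : V} (hu : u ≠ v) : c.update v a ha u = c u :=
  Function.update_of_ne hu ..

end SimpleGraph.Coloring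

lemma SimpleGraph.Coloring.exists_forall_ne [Fintype V] {G : SimpleGraph V} {k : ℕ}
    (c : G.Coloring (Fin k)) (hk : Fintype.card V < k) : ∃ a, ∀ u, c u ≠ a := by
  by_contra! hsurj
  simpa using (Fintype.card_le_of_surjective c hsurj).trans_lt hk

namespace colGraph

variable {G : SimpleGraph V} {G' : SimpleGraph V'} {k : ℕ} {c c' c₁ c₂ : G.Coloring (Fin k)}
  {u v w : V}

lemma adj_of_apply_ne (hv : c v ≠ c' v) (h : ∀ u, u ≠ v → c u = c' u) :
    (colGraph G k).Adj c c' :=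
  ⟨v, hv, fun u hu => not_not.1 fun huv => hu (h u huv)⟩

noncomputable def diffVertex (h : (colGraph G k).Adj c c') : V := h.exists.choose

lemma apply_diffVertex_ne (h : (colGraph G k).Adj c c') : c (diffVertex h) ≠ c' (diffVertex h) :=
  h.exists.choose_spec

lemma diffVertex_eq_of_apply_ne (h : (colGraph G k).Adj c c') (hv : c v ≠ c' v) :
    diffVertex h = v :=
  h.unique (apply_diffVertex_ne h) hv

lemma apply_eq_of_ne_diffVertex (h : (colGraph G k).Adj c c') (hu : u ≠ diffVertex h) :
    c u = c' u :=
  not_not.1 fun hne => hu (diffVertex_eq_of_apply_ne h hne).symm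

lemma diffVertex_eq_diffVertex_iff (h₁ : (colGraph G k).Adj c c₁) (h₂ : (colGraph G k).Adj c c₂) :
    diffVertex h₁ = diffVertex h₂ ↔ c₁ = c₂ ∨ (colGraph G k).Adj c₁ c₂ := by
  have agree (hd : diffVertex h₁ = diffVertex h₂) (u) (hu : u ≠ diffVertex h₁) : c₁ u = c₂ u :=
    (apply_eq_of_ne_diffVertex h₁ hu).symm.trans (apply_eq_of_ne_diffVertex h₂ (hd ▸ hu))
  constructor
  · intro hd
    by_cases hv : c₁ (diffVertex h₁) = c₂ (diffVertex h₁)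
    · refine .inl (DFunLike.ext _ _ fun u => ?_)
      rcases eq_or_ne u (diffVertex h₁) with rfl | hu
      exacts [hv, agree hd u hu]
    · exact .inr (adj_of_apply_ne hv (agree hd))
  · rintro (rfl | h₁₂)
    · rfl
    by_contra hd
    have hp : c₁ (diffVertex h₁) ≠ c₂ (diffVertex h₁) := fun h =>
      apply_diffVertex_ne h₁ ((apply_eq_of_ne_diffVertex h₂ hd).trans h.symm)
    have hq : c₁ (diffVertex h₂) ≠ c₂ (diffVertex h₂) := fun h =>
      apply_diffVertex_ne h₂ ((apply_eq_of_ne_diffVertex h₁ (Ne.symm hd)).trans h)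
    exact hd (h₁₂.unique hp hq)

lemma adj_of_isSquareFreeCherry (h₁ : (colGraph G k).Adj c c₁) (h₂ : (colGraph G k).Adj c c₂)
    (hP : (colGraph G k).IsSquareFreeCherry c c₁ c₂) : G.Adj (diffVertex h₁) (diffVertex h₂) := by
  classical
  obtain ⟨-, -, hne, hnadj, huniq⟩ := hP
  set v := diffVertex h₁
  set w := diffVertex h₂
  have hvw : v ≠ w := fun hd => ((diffVertex_eq_diffVertex_iff h₁ h₂).1 hd).elim hne hnadj
  have hc₁ (u) (hu : u ≠ v) : c₁ u = c u := (apply_eq_of_ne_diffVertex h₁ hu).symm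
  have hc₂ (u) (hu : u ≠ w) : c₂ u = c u := (apply_eq_of_ne_diffVertex h₂ hu).symm
  by_contra hnvw
  -- the colouring recolouring both `v` (as `c₁` does) and `w` (as `c₂` does) closes a square
  let c₃ := c₂.update v (c₁ v) fun u hu => by
    rw [hc₂ u fun h => hnvw (h ▸ hu), ← hc₁ u (G.ne_of_adj hu).symm]
    exact (c₁.valid hu).symm
  have hc₃ (u) (hu : u ≠ v) : c₃ u = c₂ u := Coloring.update_of_ne hu
  have h₁₃ : (colGraph G k).Adj c₁ c₃ := adj_of_apply_ne (v := w)
    (by rw [hc₃ w hvw.symm, hc₁ w hvw.symm]; exact apply_diffVertex_ne h₂) fun u hu => by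
      rcases eq_or_ne u v with rfl | huv
      · exact Coloring.update_self.symm
      · rw [hc₃ u huv, hc₁ u huv, hc₂ u hu]
  have h₂₃ : (colGraph G k).Adj c₂ c₃ := adj_of_apply_ne (v := v)
    (by rw [Coloring.update_self, hc₂ v hvw]; exact apply_diffVertex_ne h₁) fun u hu =>
      (hc₃ u hu).symm
  have : c₃ v = c v := by rw [huniq c₃ h₁₃ h₂₃]
  exact apply_diffVertex_ne h₁ (Coloring.update_self.symm.trans this).symm

variable [DecidableEq V]

lemma adj_update (c : G.Coloring (Fin k)) {a : Fin k} (ha : ∀ u, G.Adj v u → c u ≠ a)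
    (hv : c v ≠ a) : (colGraph G k).Adj c (c.update v a ha) :=
  adj_of_apply_ne (v := v) (by simpa using hv) fun _ hu => (Coloring.update_of_ne hu).symm

lemma diffVertex_adj_update (c : G.Coloring (Fin k)) {a : Fin k}
    (ha : ∀ u, G.Adj v u → c u ≠ a) (hv : c v ≠ a) : diffVertex (adj_update c ha hv) = v :=
  diffVertex_eq_of_apply_ne _ (by simpa using hv)

lemma update_apply_ne_update_apply_iff {a : Fin k} (ha : ∀ u, c u ≠ a) (hvw : v ≠ w) :
    (c.update v a fun u _ => ha u) u ≠ (c.update w a fun u _ => ha u) u ↔ u = v ∨ u = w := by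
  rcases eq_or_ne u v with rfl | huv
  · simpa [Coloring.update_of_ne hvw] using (ha u).symm
  rcases eq_or_ne u w with rfl | huw
  · simpa [Coloring.update_of_ne huv] using ha u
  · simp [Coloring.update_of_ne huv, Coloring.update_of_ne huw, huv, huw]

lemma eq_of_adj_update_of_adj_update {a : Fin k} (ha : ∀ u, c u ≠ a) (hvw : G.Adj v w)
    {x : G.Coloring (Fin k)} (hx₁ : (colGraph G k).Adj (c.update v a fun u _ => ha u) x)
    (hx₂ : (colGraph G k).Adj (c.update w a fun u _ => ha u) x) : x = c := by
  set p := diffVertex hx₁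
  set q := diffVertex hx₂
  have hx₁' (u) (hu : u ≠ p) : x u = c.update v a (fun u _ => ha u) u :=
    (apply_eq_of_ne_diffVertex hx₁ hu).symm
  have hx₂' (u) (hu : u ≠ q) : x u = c.update w a (fun u _ => ha u) u :=
    (apply_eq_of_ne_diffVertex hx₂ hu).symm
  have hv : v ≠ w := G.ne_of_adj hvw
  -- `x` must recolour both `v` and `w`, the two vertices where the updates disagree
  have hpq (u) (hu : u = v ∨ u = w) : u = p ∨ u = q := by
    by_contra! h
    exact (update_apply_ne_update_apply_iff ha hv).2 hu ((hx₁' u h.1).symm.trans (hx₂' u h.2))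
  have hvpq := hpq v (.inl rfl)
  have hwpq := hpq w (.inr rfl)
  by_cases hvp : v = p
  · have hwq : w ≠ p := hvp ▸ hv.symm
    refine DFunLike.ext _ _ fun u => ?_
    rcases eq_or_ne u v with rfl | huv
    · rw [hx₂' u (hwpq.resolve_left hwq ▸ hv), Coloring.update_of_ne hv]
    · rw [hx₁' u (hvp ▸ huv), Coloring.update_of_ne huv]
  · have hvq := hvpq.resolve_left hvp
    refine absurd ?_ (x.valid hvw)
    rw [hx₁' v hvp, hx₂' w (hvq ▸ hv.symm), Coloring.update_self, Coloring.update_self]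

lemma isSquareFreeCherry_update {a : Fin k} (ha : ∀ u, c u ≠ a) (hvw : G.Adj v w) :
    (colGraph G k).IsSquareFreeCherry c (c.update v a fun u _ => ha u)
      (c.update w a fun u _ => ha u) := by
  have hv : v ≠ w := G.ne_of_adj hvw
  have hdiff_v := (update_apply_ne_update_apply_iff ha hv (u := v)).2 (.inl rfl)
  have hdiff_w := (update_apply_ne_update_apply_iff ha hv (u := w)).2 (.inr rfl)
  exact ⟨adj_update c _ (ha v), adj_update c _ (ha w), fun h => hdiff_v (by rw [h]),
    fun h => hv (h.unique hdiff_v hdiff_w), fun x => eq_of_adj_update_of_adj_update ha hvw⟩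

section Transfer

variable (φ : colGraph G k ≃g colGraph G' k) {a : Fin k} (ha : ∀ u, c u ≠ a)

noncomputable def transfer (v : V) : V' :=
  diffVertex (φ.map_adj_iff.2 (adj_update c (fun u _ => ha u) (ha v)))

lemma diffVertex_map_eq_transfer (h : (colGraph G k).Adj c c₁) :
    diffVertex (φ.map_adj_iff.2 h) = transfer φ ha (diffVertex h) := by
  have hupd := adj_update c (fun u _ => ha u) (ha (diffVertex h))
  have hclass := (diffVertex_eq_diffVertex_iff h hupd).1
    (diffVertex_adj_update c (fun u _ => ha u) (ha (diffVertex h))).symm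
  exact (diffVertex_eq_diffVertex_iff _ _).2 (hclass.imp (congrArg φ) φ.map_adj_iff.2)

lemma adj_transfer (hvw : G.Adj v w) : G'.Adj (transfer φ ha v) (transfer φ ha w) :=
  adj_of_isSquareFreeCherry _ _ ((isSquareFreeCherry_update ha hvw).map φ)

lemma transfer_symm_transfer [DecidableEq V'] {c' : G'.Coloring (Fin k)} (hc : φ c = c')
    {b : Fin k} (hb : ∀ u, c' u ≠ b) (v : V) : transfer φ.symm hb (transfer φ ha v) = v := by
  subst hc
  show transfer φ.symm hb (diffVertex _) = v
  rw [← diffVertex_map_eq_transfer]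
  exact diffVertex_eq_of_apply_ne _ (by simpa using ha v)

end Transfer

end colGraph

end

open colGraph in
/-- For `k > 5n²`, the `k`-colouring graph of a graph on `n` vertices determines the
graph up to isomorphism. -/
theorem colouring_graph_determines_graph {V V' : Type*} [Fintype V] [Fintype V']
    (G : SimpleGraph V) (G' : SimpleGraph V') (n : ℕ)
    (hV : Fintype.card V = n) (hV' : Fintype.card V' = n)
    (k : ℕ) (hk : 5 * n ^ 2 < k)
    (h : Nonempty (colGraph G k ≃g colGraph G' k)) :
    Nonempty (G ≃g G') := by
  classical
  obtain ⟨φ⟩ := h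
  have hn : n < k := by nlinarith
  obtain ⟨c⟩ := G.colorable_of_fintype.mono (hV ▸ hn.le)
  obtain ⟨a, ha⟩ := c.exists_forall_ne (hV ▸ hn)
  obtain ⟨b, hb⟩ := (φ c).exists_forall_ne (hV' ▸ hn)
  let e : V ≃ V' := ⟨transfer φ ha, transfer φ.symm hb, transfer_symm_transfer φ ha rfl hb,
    transfer_symm_transfer φ.symm hb (φ.symm_apply_apply c) ha⟩
  refine ⟨⟨e, fun {v w} => ⟨fun hvw => ?_, adj_transfer φ ha⟩⟩⟩
  rw [← e.symm_apply_apply v, ← e.symm_apply_apply w]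
  exact adj_transfer φ.symm hb hvw
end

section
/- For every natural number m there exists a pair of non-isomorphic finite simple graphs G and G' such that for every connected finite simple graph H with at most m edges and for every natural number k, π_G^(H)(k) = π_{G'}^(H)(k). -/
/-
Take for `G` and `G'` the path on `2m + 6` vertices with one edge removed, once at
`{m + 1, m + 2}` and once at `{m + 2, m + 3}`: the component sizes `{m + 2, m + 4}` and
`{m + 3, m + 3}` show that they are not isomorphic.

A connected family `S` of colourings with at most `m` edges in the colouring graph varies on at
most `m` vertices, since every such vertex is the one recoloured along some edge of `S`. Hence
one of the `m + 1` nested segments `(m - j, m + 4 + j)` around the removed edge has both endpoints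
in the region where `S` is constant. Reflecting every colouring across that segment and swapping
the two endpoint colours inside it turns proper colourings of `G` into proper colourings of `G'`
and keeps the set of vertices at which two members of `S` differ (up to the reflection), so it
maps copies of `H` to copies of `H`. Using the least such segment makes this map an involution.
-/

open SimpleGraph

section ColoringGraph

variable {V : Type*} {G : SimpleGraph V} {k : ℕ}

lemma colGraph_adj_congr {V' : Type*} {G' : SimpleGraph V'} (σ : V ≃ V')
    {c d : G.Coloring (Fin k)} {c' d' : G'.Coloring (Fin k)}
    (h : ∀ v, c v ≠ d v ↔ c' (σ v) ≠ d' (σ v)) :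
    (colGraph G k).Adj c d ↔ (colGraph G' k).Adj c' d' :=
  σ.existsUnique_congr h

def varyingVertices {α : Type*} (S : Set (G.Coloring α)) : Set V :=
  {v | ∃ c ∈ S, ∃ d ∈ S, c v ≠ d v}

lemma eq_of_notMem_varyingVertices {α : Type*} {S : Set (G.Coloring α)} {v : V}
    (hv : v ∉ varyingVertices S) {c d : G.Coloring α} (hc : c ∈ S) (hd : d ∈ S) :
    c v = d v :=
  not_not.mp fun hne => hv ⟨c, hc, d, hd, hne⟩

lemma exists_adj_ne_of_mem_varyingVertices {S : Set (G.Coloring (Fin k))}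
    (hS : ((colGraph G k).induce S).Connected) {v : V} (hv : v ∈ varyingVertices S) :
    ∃ c d : S, ((colGraph G k).induce S).Adj c d ∧
      (c : G.Coloring (Fin k)) v ≠ (d : G.Coloring (Fin k)) v := by
  obtain ⟨c, hc, d, hd, hcd⟩ := hv
  obtain ⟨w⟩ := hS.preconnected ⟨c, hc⟩ ⟨d, hd⟩
  obtain ⟨x, -, hx, hxy⟩ :=
    w.exists_boundary_dart {z | (z : G.Coloring (Fin k)) v = c v} rfl (Ne.symm hcd)
  exact ⟨x.fst, x.snd, x.adj, fun h => hxy (h.symm.trans hx)⟩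

/-- Every vertex where `S` varies is the vertex recoloured along some edge of `S`, and an edge
recolours only one vertex. -/
lemma ncard_varyingVertices_le {S : Set (G.Coloring (Fin k))} {W : Type*} [Finite W]
    {H : SimpleGraph W} (hH : H.Connected) (e : (colGraph G k).induce S ≃g H) :
    (varyingVertices S).ncard ≤ H.edgeSet.ncard := by
  choose c d hadj hne using fun v : varyingVertices S =>
    exists_adj_ne_of_mem_varyingVertices (e.connected_iff.mpr hH) v.2
  let edge (v : varyingVertices S) : H.edgeSet :=
    e.mapEdgeSet ⟨s(c v, d v), (hadj v)⟩
  have hedge : edge.Injective := by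
    intro v w hvw
    have hvw' : s(c v, d v) = s(c w, d w) := by
      simpa [edge] using congrArg Subtype.val (e.mapEdgeSet.injective hvw)
    have hv : (colGraph G k).Adj (c v : G.Coloring (Fin k)) (d v) := hadj v
    apply Subtype.ext
    rcases Sym2.eq_iff.mp hvw' with ⟨hc, hd⟩ | ⟨hc, hd⟩
    · exact hv.unique (hne v) (by simpa only [hc, hd] using hne w)
    · exact hv.unique (hne v) (by simpa only [hc, hd] using (hne w).symm)
  rw [← Nat.card_coe_set_eq, ← Nat.card_coe_set_eq]
  exact Nat.card_le_card_of_injective edge hedge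

end ColoringGraph

def cutPath (n p : ℕ) : SimpleGraph (Fin n) :=
  fromRel fun u v => (u : ℕ) + 1 = v ∧ (v : ℕ) ≠ p

section CutPath

variable {n p : ℕ}

lemma cutPath_adj {u v : Fin n} :
    (cutPath n p).Adj u v ↔
      ((u : ℕ) + 1 = v ∧ (v : ℕ) ≠ p) ∨ ((v : ℕ) + 1 = u ∧ (u : ℕ) ≠ p) := by
  simp only [cutPath, fromRel_adj, ne_eq, and_iff_right_iff_imp]
  rintro (⟨h, -⟩ | ⟨h, -⟩) rfl <;> omega

lemma reachable_cutPath_iff {u v : Fin n} :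
    (cutPath n p).Reachable u v ↔ ((u : ℕ) < p ↔ (v : ℕ) < p) := by
  constructor
  · rintro ⟨w⟩
    induction w with
    | nil => rfl
    | cons hadj _ ih =>
      have hside := cutPath_adj.mp hadj
      exact (by omega : _ ↔ _).trans ih
  · intro hside
    wlog huv : u ≤ v generalizing u v
    · exact (this hside.symm (le_of_not_ge huv)).symm
    obtain ⟨d, hd⟩ : ∃ d, (v : ℕ) = u + d := ⟨v - u, by omega⟩
    induction d generalizing v with
    | zero => rw [show v = u from Fin.ext (by omega)]
    | succ d ih =>
      obtain ⟨w, hw⟩ : ∃ w : Fin n, (w : ℕ) = u + d := ⟨⟨u + d, by omega⟩, rfl⟩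
      refine (ih (v := w) (by omega) (by simp [Fin.le_def, hw]) hw).trans
        (Adj.reachable (cutPath_adj.mpr (Or.inl ⟨by omega, by omega⟩)))

lemma card_reachable_cutPath (hpn : p ≤ n) (u : Fin n) :
    Nat.card {v // (cutPath n p).Reachable u v} = if (u : ℕ) < p then p else n - p := by
  simp only [reachable_cutPath_iff, Nat.card_eq_fintype_card, Fintype.card_subtype]
  split_ifs with hu
  · simp only [hu, true_iff, Fin.card_filter_val_lt, min_eq_right hpn]
  · have hcompl := Finset.card_filter_add_card_filter_not (s := Finset.univ)
      fun v : Fin n => (v : ℕ) < p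
    simp only [Fin.card_filter_val_lt, Finset.card_univ, Fintype.card_fin] at hcompl
    simp only [hu, false_iff]
    omega

lemma eq_or_add_eq_of_iso_cutPath {q : ℕ} (hp : 0 < p) (hpn : p ≤ n) (hqn : q ≤ n)
    (f : cutPath n p ≃g cutPath n q) : p = q ∨ p + q = n := by
  let u : Fin n := ⟨0, by omega⟩
  have hcard := Nat.card_congr (f.toEquiv.subtypeEquiv fun v => Iso.reachable_iff.symm :
    {v // (cutPath n p).Reachable u v} ≃ {v // (cutPath n q).Reachable (f u) v})
  rw [card_reachable_cutPath hpn, card_reachable_cutPath hqn] at hcard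
  split_ifs at hcard <;> omega

end CutPath

section SegmentFlip

variable {n : ℕ} (l r : Fin n)

def segReflect (v : Fin n) : Fin n :=
  if h : v ∈ Set.Ioo l r then ⟨l + r - v, by grind⟩ else v

variable {l r}

lemma val_segReflect_of_mem {v : Fin n} (h : v ∈ Set.Ioo l r) :
    (segReflect l r v : ℕ) = l + r - v := by
  simp [segReflect, h]

lemma segReflect_of_notMem {v : Fin n} (h : v ∉ Set.Ioo l r) : segReflect l r v = v := by
  simp [segReflect, h]

lemma segReflect_mem_Ioo_iff {v : Fin n} :
    segReflect l r v ∈ Set.Ioo l r ↔ v ∈ Set.Ioo l r := by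
  by_cases h : v ∈ Set.Ioo l r
  · have := val_segReflect_of_mem h
    simp only [Set.mem_Ioo] at h ⊢
    omega
  · rw [segReflect_of_notMem h]

variable (l r) in
lemma segReflect_involutive : Function.Involutive (segReflect l r) := by
  intro v
  by_cases h : v ∈ Set.Ioo l r
  · have h' := segReflect_mem_Ioo_iff.mpr h
    have := val_segReflect_of_mem h
    have := val_segReflect_of_mem h'
    simp only [Set.mem_Ioo] at h
    ext
    omega
  · rw [segReflect_of_notMem h, segReflect_of_notMem h]

variable {α : Type*} [DecidableEq α]

variable (l r) in
def segFlip (c : Fin n → α) (v : Fin n) : α :=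
  if v ∈ Set.Ioo l r then Equiv.swap (c l) (c r) (c (segReflect l r v)) else c v

lemma segFlip_of_mem {c : Fin n → α} {v : Fin n} (h : v ∈ Set.Ioo l r) :
    segFlip l r c v = Equiv.swap (c l) (c r) (c (segReflect l r v)) := if_pos h

lemma segFlip_of_notMem {c : Fin n → α} {v : Fin n} (h : v ∉ Set.Ioo l r) :
    segFlip l r c v = c v := if_neg h

lemma segFlip_ne_iff {c d : Fin n → α} (hl : c l = d l) (hr : c r = d r) (v : Fin n) :
    segFlip l r c v ≠ segFlip l r d v ↔ c (segReflect l r v) ≠ d (segReflect l r v) := by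
  by_cases h : v ∈ Set.Ioo l r
  · rw [segFlip_of_mem h, segFlip_of_mem h, hl, hr]
    exact (Equiv.swap _ _).injective.ne_iff
  · rw [segFlip_of_notMem h, segFlip_of_notMem h, segReflect_of_notMem h]

lemma segFlip_segFlip (c : Fin n → α) : segFlip l r (segFlip l r c) = c := by
  have hl : segFlip l r c l = c l := segFlip_of_notMem (by simp)
  have hr : segFlip l r c r = c r := segFlip_of_notMem (by simp)
  funext v
  by_cases h : v ∈ Set.Ioo l r
  · rw [segFlip_of_mem h, hl, hr, segFlip_of_mem (segReflect_mem_Ioo_iff.mpr h),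
      segReflect_involutive, Equiv.swap_apply_self]
  · rw [segFlip_of_notMem h, segFlip_of_notMem h]

variable {p q : ℕ}

/-- Reflection moves the missing edge `{p - 1, p}` of the path to `{q - 1, q}`; the colour swap
repairs the two boundary edges of the segment. -/
lemma segFlip_ne_of_succ (hlp : (l : ℕ) + 1 < p) (hpr : p < r) (hpq : p + q = l + r + 1)
    (c : (cutPath n p).Coloring α) {u v : Fin n} (huv : (u : ℕ) + 1 = v)
    (hvq : (v : ℕ) ≠ q) :
    segFlip l r c u ≠ segFlip l r c v := by
  have hc : ∀ x y : Fin n, (x : ℕ) + 1 = y → (y : ℕ) ≠ p → c x ≠ c y :=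
    fun x y hxy hyp => c.valid (cutPath_adj.mpr (Or.inl ⟨hxy, hyp⟩))
  set σ := Equiv.swap (c l) (c r)
  by_cases hu : u ∈ Set.Ioo l r <;> by_cases hv : v ∈ Set.Ioo l r
  · have := val_segReflect_of_mem hu
    have := val_segReflect_of_mem hv
    rw [segFlip_of_mem hu, segFlip_of_mem hv]
    exact σ.injective.ne (hc _ _ (by grind) (by omega)).symm
  · obtain rfl : v = r := by ext; grind
    have := val_segReflect_of_mem hu
    rw [segFlip_of_mem hu, segFlip_of_notMem hv]
    refine ne_of_ne_of_eq (σ.injective.ne (hc _ _ ?_ ?_).symm)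
      (Equiv.swap_apply_left _ _) <;> grind
  · obtain rfl : u = l := by ext; grind
    have := val_segReflect_of_mem hv
    rw [segFlip_of_notMem hu, segFlip_of_mem hv]
    refine ne_of_eq_of_ne (Equiv.swap_apply_right _ _).symm
      (σ.injective.ne (hc _ _ ?_ ?_).symm) <;> grind
  · rw [segFlip_of_notMem hu, segFlip_of_notMem hv]
    exact hc u v huv (by grind)

variable (l r) in
def flipColoring (hlp : (l : ℕ) + 1 < p) (hpr : p < r) (hpq : p + q = l + r + 1)
    (c : (cutPath n p).Coloring α) : (cutPath n q).Coloring α :=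
  Coloring.mk (segFlip l r c) fun {u v} huv => by
    rcases cutPath_adj.mp huv with ⟨huv, hvq⟩ | ⟨hvu, huq⟩
    · exact segFlip_ne_of_succ hlp hpr hpq c huv hvq
    · exact (segFlip_ne_of_succ hlp hpr hpq c hvu huq).symm

end SegmentFlip

section FlipColoring

variable {n k p q : ℕ} {l r : Fin n} {α : Type*} [DecidableEq α]

lemma flipColoring_flipColoring (hlp : (l : ℕ) + 1 < p) (hpr : p < r) (hpq : p + q = l + r + 1)
    (hlq : (l : ℕ) + 1 < q) (hqr : q < r) (hqp : q + p = l + r + 1)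
    (c : (cutPath n p).Coloring α) :
    flipColoring l r hlq hqr hqp (flipColoring l r hlp hpr hpq c) = c :=
  DFunLike.coe_injective (segFlip_segFlip c)

lemma flipColoring_injective (hlp : (l : ℕ) + 1 < p) (hpr : p < r) (hpq : p + q = l + r + 1) :
    (flipColoring l r hlp hpr hpq : (cutPath n p).Coloring α → _).Injective :=
  Function.LeftInverse.injective
    (flipColoring_flipColoring hlp hpr hpq (by omega) (by omega) (by omega))

lemma varyingVertices_image_flipColoring (hlp : (l : ℕ) + 1 < p) (hpr : p < r)
    (hpq : p + q = l + r + 1) {S : Set ((cutPath n p).Coloring α)} (hl : l ∉ varyingVertices S)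
    (hr : r ∉ varyingVertices S) :
    varyingVertices (flipColoring l r hlp hpr hpq '' S) =
      segReflect l r ⁻¹' varyingVertices S := by
  ext v
  simp only [varyingVertices, Set.mem_preimage, Set.mem_ofPred_eq, Set.exists_mem_image]
  refine exists_congr fun c => and_congr_right fun hc =>
    exists_congr fun d => and_congr_right fun hd => ?_
  exact segFlip_ne_iff (eq_of_notMem_varyingVertices hl hc hd)
    (eq_of_notMem_varyingVertices hr hc hd) v

lemma nonempty_iso_induce_image_flipColoring (hlp : (l : ℕ) + 1 < p) (hpr : p < r)
    (hpq : p + q = l + r + 1) {S : Set ((cutPath n p).Coloring (Fin k))}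
    (hl : l ∉ varyingVertices S) (hr : r ∉ varyingVertices S) :
    Nonempty ((colGraph (cutPath n p) k).induce S ≃g
      (colGraph (cutPath n q) k).induce (flipColoring l r hlp hpr hpq '' S)) :=
  ⟨{ toEquiv := Equiv.Set.image _ S (flipColoring_injective hlp hpr hpq)
     map_rel_iff' := fun {c d} => colGraph_adj_congr (segReflect_involutive l r).toPerm
       (segFlip_ne_iff (eq_of_notMem_varyingVertices hl c.2 d.2)
         (eq_of_notMem_varyingVertices hr c.2 d.2)) }⟩

end FlipColoring

section Gaps

variable {m : ℕ}

def gapLo (j : Fin (m + 1)) : Fin (2 * m + 6) := ⟨m - j, by omega⟩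

def gapHi (j : Fin (m + 1)) : Fin (2 * m + 6) := ⟨m + 4 + j, by omega⟩

lemma val_gapLo (j : Fin (m + 1)) : (gapLo j : ℕ) = m - j := rfl

lemma val_gapHi (j : Fin (m + 1)) : (gapHi j : ℕ) = m + 4 + j := rfl

def IsGap (D : Set (Fin (2 * m + 6))) (j : Fin (m + 1)) : Prop :=
  gapLo j ∉ D ∧ gapHi j ∉ D

/-- Pigeonhole: the `m + 1` pairs `{gapLo j, gapHi j}` are pairwise disjoint. -/
lemma exists_isGap_of_ncard_le {D : Set (Fin (2 * m + 6))} (hD : D.ncard ≤ m) :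
    ∃ j, IsGap D j := by
  classical
  by_contra! hD'
  have hmem (j : Fin (m + 1)) : gapLo j ∈ D ∨ gapHi j ∈ D := by
    by_contra! hj
    exact hD' j hj
  let f (j : Fin (m + 1)) : D :=
    if hj : gapLo j ∈ D then ⟨gapLo j, hj⟩ else ⟨gapHi j, (hmem j).resolve_left hj⟩
  have hf : f.Injective := by
    intro i j hij
    have hval := congrArg (fun x : D => ((x : Fin (2 * m + 6)) : ℕ)) hij
    simp only [f] at hval
    split_ifs at hval <;> simp only [val_gapLo, val_gapHi] at hval <;> omega
  have := Nat.card_le_card_of_injective f hf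
  rw [Nat.card_coe_set_eq, Nat.card_eq_fintype_card, Fintype.card_fin] at this
  omega

open Classical in
noncomputable def leastGap (D : Set (Fin (2 * m + 6))) : Fin (m + 1) :=
  if h : ∃ j, IsGap D j then wellFounded_lt.min {j | IsGap D j} h else 0

variable {D : Set (Fin (2 * m + 6))}

lemma isGap_leastGap (h : ∃ j, IsGap D j) : IsGap D (leastGap D) := by
  rw [leastGap, dif_pos h]
  exact wellFounded_lt.min_mem _ h

lemma leastGap_le {j : Fin (m + 1)} (h : IsGap D j) : leastGap D ≤ j := by
  rw [leastGap, dif_pos ⟨j, h⟩]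
  exact not_lt.mp (wellFounded_lt.not_lt_min {j | IsGap D j} h)

lemma leastGap_eq {j : Fin (m + 1)} (hj : IsGap D j) (hmin : ∀ i < j, ¬ IsGap D i) :
    leastGap D = j :=
  (leastGap_le hj).antisymm (not_lt.mp fun hlt => hmin _ hlt (isGap_leastGap ⟨j, hj⟩))

lemma segReflect_gapLo_of_lt {i j : Fin (m + 1)} (hij : i < j) :
    segReflect (gapLo j) (gapHi j) (gapLo i) = gapHi i := by
  have hmem : gapLo i ∈ Set.Ioo (gapLo j) (gapHi j) := by
    simp only [Set.mem_Ioo, Fin.lt_def, val_gapLo, val_gapHi]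
    omega
  ext
  rw [val_segReflect_of_mem hmem, val_gapLo, val_gapLo, val_gapHi, val_gapHi]
  omega

lemma segReflect_gapHi_of_lt {i j : Fin (m + 1)} (hij : i < j) :
    segReflect (gapLo j) (gapHi j) (gapHi i) = gapLo i := by
  rw [← segReflect_gapLo_of_lt hij, segReflect_involutive]

/-- The segments are nested, so the reflection of a larger one swaps the two ends of each
smaller one and fixes its own ends. -/
lemma isGap_preimage_segReflect_iff {i j : Fin (m + 1)} (hij : i ≤ j) :
    IsGap (segReflect (gapLo j) (gapHi j) ⁻¹' D) i ↔ IsGap D i := by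
  rcases hij.lt_or_eq with hlt | rfl
  · simp only [IsGap, Set.mem_preimage, segReflect_gapLo_of_lt hlt, segReflect_gapHi_of_lt hlt,
      and_comm]
  · simp only [IsGap, Set.mem_preimage, segReflect_of_notMem Set.left_notMem_Ioo,
      segReflect_of_notMem Set.right_notMem_Ioo]

lemma leastGap_preimage_segReflect (h : ∃ j, IsGap D j) :
    leastGap (segReflect (gapLo (leastGap D)) (gapHi (leastGap D)) ⁻¹' D) = leastGap D :=
  leastGap_eq ((isGap_preimage_segReflect_iff le_rfl).mpr (isGap_leastGap h))
    fun _ hi hgap => (leastGap_le ((isGap_preimage_segReflect_iff hi.le).mp hgap)).not_gt hi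

end Gaps

section FlipSet

variable {m p q : ℕ}

lemma gapLo_add_one_lt (hp : m + 2 ≤ p) (j : Fin (m + 1)) : (gapLo j : ℕ) + 1 < p := by
  rw [val_gapLo]
  omega

lemma lt_gapHi (hq : m + 2 ≤ q) (hpq : p + q = 2 * m + 5) (j : Fin (m + 1)) :
    p < gapHi j := by
  rw [val_gapHi]
  omega

lemma add_eq_gapLo_add_gapHi (hpq : p + q = 2 * m + 5) (j : Fin (m + 1)) :
    p + q = gapLo j + gapHi j + 1 := by
  rw [val_gapLo, val_gapHi]
  omega

variable (hp : m + 2 ≤ p) (hq : m + 2 ≤ q) (hpq : p + q = 2 * m + 5)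
  {α : Type*} [DecidableEq α]

def flipSet (S : Set ((cutPath (2 * m + 6) p).Coloring α)) :
    Set ((cutPath (2 * m + 6) q).Coloring α) :=
  let j := leastGap (varyingVertices S)
  flipColoring (gapLo j) (gapHi j) (gapLo_add_one_lt hp j) (lt_gapHi hq hpq j)
    (add_eq_gapLo_add_gapHi hpq j) '' S

lemma flipSet_eq_image {S : Set ((cutPath (2 * m + 6) p).Coloring α)} {j : Fin (m + 1)}
    (hj : leastGap (varyingVertices S) = j) :
    flipSet hp hq hpq S = flipColoring (gapLo j) (gapHi j) (gapLo_add_one_lt hp j)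
      (lt_gapHi hq hpq j) (add_eq_gapLo_add_gapHi hpq j) '' S := by
  subst hj
  rfl

lemma flipSet_flipSet {S : Set ((cutPath (2 * m + 6) p).Coloring α)}
    (h : ∃ j, IsGap (varyingVertices S) j) :
    flipSet hq hp (by omega) (flipSet hp hq hpq S) = S := by
  obtain ⟨hl, hr⟩ := isGap_leastGap h
  have hj :
      leastGap (varyingVertices (flipSet hp hq hpq S)) = leastGap (varyingVertices S) := by
    rw [flipSet_eq_image _ _ _ rfl, varyingVertices_image_flipColoring _ _ _ hl hr]
    exact leastGap_preimage_segReflect h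
  rw [flipSet_eq_image _ _ _ hj, flipSet_eq_image _ _ _ rfl, Set.image_image]
  simp only [flipColoring_flipColoring, Set.image_id']

lemma nonempty_iso_induce_flipSet {k : ℕ} {S : Set ((cutPath (2 * m + 6) p).Coloring (Fin k))}
    (h : ∃ j, IsGap (varyingVertices S) j) :
    Nonempty ((colGraph (cutPath (2 * m + 6) p) k).induce S ≃g
      (colGraph (cutPath (2 * m + 6) q) k).induce (flipSet hp hq hpq S)) :=
  nonempty_iso_induce_image_flipColoring _ _ _ (isGap_leastGap h).1 (isGap_leastGap h).2

end FlipSet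

section Copies

variable {m p q : ℕ} {W : Type*} [Finite W] {H : SimpleGraph W}

lemma exists_isGap_of_iso (hH : H.Connected) (hHm : H.edgeSet.ncard ≤ m) {k : ℕ}
    {S : Set ((cutPath (2 * m + 6) p).Coloring (Fin k))}
    (e : (colGraph (cutPath (2 * m + 6) p) k).induce S ≃g H) :
    ∃ j, IsGap (varyingVertices S) j :=
  exists_isGap_of_ncard_le ((ncard_varyingVertices_le hH e).trans hHm)

def flipCopy (hp : m + 2 ≤ p) (hq : m + 2 ≤ q) (hpq : p + q = 2 * m + 5)
    (hH : H.Connected) (hHm : H.edgeSet.ncard ≤ m) {k : ℕ}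
    (S : {S : Set ((cutPath (2 * m + 6) p).Coloring (Fin k)) //
      Nonempty ((colGraph (cutPath (2 * m + 6) p) k).induce S ≃g H)}) :
    {T : Set ((cutPath (2 * m + 6) q).Coloring (Fin k)) //
      Nonempty ((colGraph (cutPath (2 * m + 6) q) k).induce T ≃g H)} :=
  ⟨flipSet hp hq hpq S, S.2.elim fun e =>
    (nonempty_iso_induce_flipSet hp hq hpq (exists_isGap_of_iso hH hHm e)).map
      fun f => f.symm.trans e⟩

lemma piHG_cutPath_eq (hp : m + 2 ≤ p) (hq : m + 2 ≤ q) (hpq : p + q = 2 * m + 5)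
    (hH : H.Connected) (hHm : H.edgeSet.ncard ≤ m) (k : ℕ) :
    piHG (cutPath (2 * m + 6) p) H k = piHG (cutPath (2 * m + 6) q) H k :=
  Nat.card_congr
    { toFun := flipCopy hp hq hpq hH hHm
      invFun := flipCopy hq hp (by omega) hH hHm
      left_inv := fun S => Subtype.ext <| S.2.elim fun e =>
        flipSet_flipSet hp hq hpq (exists_isGap_of_iso hH hHm e)
      right_inv := fun T => Subtype.ext <| T.2.elim fun e =>
        flipSet_flipSet hq hp (by omega) (exists_isGap_of_iso hH hHm e) }

end Copies

/-- For every `m` there are non-isomorphic graphs `G, G'` which agree on the generalised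
chromatic polynomial `π^(H)` for every connected graph `H` with at most `m` edges. -/
theorem connected_polynomials_not_complete (m : ℕ) :
    ∃ (n : ℕ) (G G' : SimpleGraph (Fin n)),
      IsEmpty (G ≃g G') ∧
      ∀ (W : Type) [Fintype W] (H : SimpleGraph W),
        H.Connected → H.edgeSet.ncard ≤ m →
        ∀ k : ℕ, piHG G H k = piHG G' H k := by
  refine ⟨2 * m + 6, cutPath _ (m + 2), cutPath _ (m + 3), ⟨fun f => ?_⟩, ?_⟩
  · have := eq_or_add_eq_of_iso_cutPath (by omega) (by omega) (by omega) f
    omega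
  · intro W _ H hH hHm k
    exact piHG_cutPath_eq (by omega) (by omega) (by omega) hH hHm k
end

section
/- Let H be a finite simple graph. Then there exists a finite collection F of connected finite simple graphs such that the polynomials {π_G^(F)}_{F ∈ F} uniquely determine π_G^(H): for all finite simple graphs G₁ and G₂, if π_{G₁}^(F)(k) = π_{G₂}^(F)(k) for every F ∈ F and every natural number k, then π_{G₁}^(H)(k) = π_{G₂}^(H)(k) for every natural number k. -/
open SimpleGraph

/-! Counting induced copies of `H` is counting induced embeddings of `H`, up to the factor
`|Aut H|`. If `K` is the disjoint union of `A` and `B`, a pair of embeddings of `A` and `B`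
into `X` is a map from `A ⊕ B` to `X`, and grouping such maps by their pattern (which vertices
they identify, which pairs they send to edges) gives
`emb(A, X) · emb(B, X) = ∑ emb(Q, X)`, the sum running over the quotient graphs `Q` of the
possible patterns. The trivial pattern contributes `emb(A ⊔ B, X)`; every other `Q` has fewer
vertices, or as many vertices and more edges. By induction on (vertices, non-edges) the
embedding counts of all graphs with at most `|H|` vertices are thus determined by those of the
connected ones. -/

open Function

namespace SimpleGraph

variable {V V' α γ β : Type*} {G : SimpleGraph V} {G' : SimpleGraph V'} {X : SimpleGraph β}

instance [Finite V] [Finite β] : Finite (G ↪g X) := DFunLike.finite _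

instance [Finite V] [Finite V'] : Finite (G ≃g G') := DFunLike.finite _

instance [Finite V] [Finite α] : Finite (G.Coloring α) := DFunLike.finite _

lemma card_embedding_congr_left (e : G ≃g G') : Nat.card (G ↪g X) = Nat.card (G' ↪g X) :=
  Nat.card_congr (RelIso.relEmbeddingCongr e Iso.refl)

lemma card_embedding_of_isEmpty [IsEmpty V] : Nat.card (G ↪g X) = 1 :=
  Nat.card_eq_one_iff_unique.2
    ⟨⟨fun _ _ => RelEmbedding.ext isEmptyElim⟩, ⟨⟨.ofIsEmpty, fun {a} => isEmptyElim a⟩⟩⟩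

noncomputable def embeddingRangeEqEquivIso (S : Set β) :
    {f : G ↪g X // Set.range f = S} ≃ (G ≃g X.induce S) where
  toFun f := f.1.isoInduceRange.trans ⟨Equiv.setCongr f.2, Iff.rfl⟩
  invFun e := ⟨(Embedding.induce S).comp e.toEmbedding, by
    ext x
    simp⟩
  left_inv _ := rfl
  right_inv _ := RelIso.ext fun _ => rfl

lemma card_embedding_eq_card_aut_mul_card_induce [Finite V] [Finite β]
    (G : SimpleGraph V) (X : SimpleGraph β) :
    Nat.card (G ↪g X) =
      Nat.card (G ≃g G) * Nat.card {S : Set β // Nonempty (X.induce S ≃g G)} :=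
  calc Nat.card (G ↪g X)
      = Nat.card (Σ S : {S : Set β // Nonempty (X.induce S ≃g G)},
          {f : G ↪g X // Set.range f = S}) :=
        Nat.card_congr (Equiv.sigmaSubtypeFiberEquiv _ _ fun f => ⟨f.isoInduceRange.symm⟩).symm
    _ = Nat.card ({S : Set β // Nonempty (X.induce S ≃g G)} × (G ≃g G)) :=
        Nat.card_congr <| Equiv.sigmaEquivProdOfEquiv fun S =>
          (embeddingRangeEqEquivIso S.1).trans (RelIso.relIsoCongr Iso.refl S.2.some)
    _ = _ := by rw [Nat.card_prod, mul_comm]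

/-- The pattern of a map `φ : ι → β` into a graph `X` is the kernel of `φ` together with the
pullback of `X` along `φ` (`patternOf`); a `Pattern` is any such pair in which the graph
respects the relation. -/
@[ext]
structure Pattern (ι : Type*) where
  rel : Setoid ι
  graph : SimpleGraph ι
  adj_of_rel ⦃x x' y y' : ι⦄ : rel x x' → rel y y' → graph.Adj x y → graph.Adj x' y'

namespace Pattern

variable {ι : Type*}

instance [Finite ι] : Finite (Pattern ι) :=
  Finite.of_injective (fun P => (⇑P.rel, P.graph)) fun P Q h => by
    simp only [Prod.mk.injEq] at h
    exact Pattern.ext (Setoid.ext fun x y => by rw [h.1]) h.2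

def quotGraph (P : Pattern ι) : SimpleGraph (Quotient P.rel) where
  Adj := Quotient.lift₂ P.graph.Adj fun _ _ _ _ hx hy =>
    propext ⟨P.adj_of_rel hx hy, P.adj_of_rel (P.rel.symm hx) (P.rel.symm hy)⟩
  symm := ⟨Quotient.ind₂ fun _ _ => P.graph.adj_symm⟩
  loopless := ⟨Quotient.ind P.graph.loopless.irrefl⟩

noncomputable def isoQuotGraph (P : Pattern ι) (h : Injective (Quotient.mk P.rel)) :
    P.graph ≃g P.quotGraph :=
  ⟨Equiv.ofBijective _ ⟨h, Quotient.mk_surjective⟩, Iff.rfl⟩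

end Pattern

def patternOf (X : SimpleGraph β) {ι : Type*} (φ : ι → β) : Pattern ι where
  rel := Setoid.ker φ
  graph := X.comap φ
  adj_of_rel _ _ _ _ hx hy h := by
    rw [Setoid.ker_def] at hx hy
    rwa [comap_adj, ← hx, ← hy]

lemma patternOf_eq_iff {ι : Type*} {φ : ι → β} {P : Pattern ι} :
    patternOf X φ = P ↔
      (∀ x y, φ x = φ y ↔ P.rel x y) ∧ ∀ x y, X.Adj (φ x) (φ y) ↔ P.graph.Adj x y := by
  simp [Pattern.ext_iff, Setoid.ext_iff, SimpleGraph.ext_iff, funext_iff, patternOf,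
    Setoid.ker_def]

def Pattern.fiberEquiv {ι : Type*} (X : SimpleGraph β) (P : Pattern ι) :
    {φ : ι → β // patternOf X φ = P} ≃ (P.quotGraph ↪g X) where
  toFun φ :=
    have hφ := patternOf_eq_iff.1 φ.2
    { toFun := Quotient.lift φ.1 fun x y h => (hφ.1 x y).2 h
      inj' := Quotient.ind₂ fun x y h => Quotient.sound ((hφ.1 x y).1 h)
      map_rel_iff' := fun {q q'} => Quotient.inductionOn₂ q q' fun x y => hφ.2 x y }
  invFun e := ⟨e ∘ Quotient.mk _, patternOf_eq_iff.2
    ⟨fun _ _ => e.injective.eq_iff.trans Quotient.eq, fun _ _ => e.map_adj_iff⟩⟩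
  left_inv _ := rfl
  right_inv _ := RelEmbedding.ext (Quotient.ind fun _ => rfl)

structure Pattern.Glues (P : Pattern (α ⊕ γ)) (A : SimpleGraph α) (B : SimpleGraph γ) :
    Prop where
  eq_of_rel_inl ⦃i i' : α⦄ : P.rel (.inl i) (.inl i') → i = i'
  eq_of_rel_inr ⦃j j' : γ⦄ : P.rel (.inr j) (.inr j') → j = j'
  adj_inl_iff (i i' : α) : P.graph.Adj (.inl i) (.inl i') ↔ A.Adj i i'
  adj_inr_iff (j j' : γ) : P.graph.Adj (.inr j) (.inr j') ↔ B.Adj j j'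

variable {A : SimpleGraph α} {B : SimpleGraph γ}

lemma Pattern.Glues.sum_le {P : Pattern (α ⊕ γ)} (hP : P.Glues A B) : A ⊕g B ≤ P.graph := by
  rintro (i | j) (i' | j') h
  · exact (hP.adj_inl_iff i i').2 h
  · simp at h
  · simp at h
  · exact (hP.adj_inr_iff j j').2 h

lemma glues_patternOf_id : (patternOf (A ⊕g B) id).Glues A B :=
  ⟨fun _ _ h => Sum.inl_injective h, fun _ _ h => Sum.inr_injective h, fun _ _ => Iff.rfl,
    fun _ _ => Iff.rfl⟩

def embeddingProdEquiv (A : SimpleGraph α) (B : SimpleGraph γ) (X : SimpleGraph β) :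
    (A ↪g X) × (B ↪g X) ≃ {φ : α ⊕ γ → β // (patternOf X φ).Glues A B} where
  toFun fg := ⟨Sum.elim fg.1 fg.2,
    ⟨fun _ _ h => fg.1.injective h, fun _ _ h => fg.2.injective h,
      fun _ _ => fg.1.map_adj_iff, fun _ _ => fg.2.map_adj_iff⟩⟩
  invFun φ := (⟨⟨φ.1 ∘ Sum.inl, φ.2.eq_of_rel_inl⟩, φ.2.adj_inl_iff _ _⟩,
    ⟨⟨φ.1 ∘ Sum.inr, φ.2.eq_of_rel_inr⟩, φ.2.adj_inr_iff _ _⟩)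
  left_inv _ := rfl
  right_inv φ := Subtype.ext (Sum.elim_comp_inl_inr φ.1)

def sigmaGluesEquiv (A : SimpleGraph α) (B : SimpleGraph γ) (X : SimpleGraph β) :
    (Σ P : {P : Pattern (α ⊕ γ) // P.Glues A B}, {φ // patternOf X φ = P.1}) ≃
      {φ : α ⊕ γ → β // (patternOf X φ).Glues A B} where
  toFun x := ⟨x.2.1, (congrArg (·.Glues A B) x.2.2).mpr x.1.2⟩
  invFun φ := ⟨⟨_, φ.2⟩, φ.1, rfl⟩
  left_inv x := Sigma.subtype_ext (Subtype.ext x.2.2) rfl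
  right_inv _ := rfl

theorem card_embedding_mul_card_embedding [Finite α] [Finite γ] [Finite β]
    (A : SimpleGraph α) (B : SimpleGraph γ) (X : SimpleGraph β) :
    Nat.card (A ↪g X) * Nat.card (B ↪g X) =
      Nat.card (Σ P : {P : Pattern (α ⊕ γ) // P.Glues A B}, P.1.quotGraph ↪g X) := by
  rw [← Nat.card_prod]
  exact Nat.card_congr <| (embeddingProdEquiv A B X).trans <|
    (sigmaGluesEquiv A B X).symm.trans <| Equiv.sigmaCongrRight fun P => P.1.fiberEquiv X

noncomputable def complexity (G : SimpleGraph V) : ℕ ×ₗ ℕ :=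
  toLex (Nat.card V, Nat.card Gᶜ.edgeSet)

lemma complexity_congr (e : G ≃g G') : complexity G = complexity G' := by
  have eCompl : Gᶜ ≃g G'ᶜ := ⟨e.toEquiv, by simp [e.injective.ne_iff, Iso.map_adj_iff]⟩
  rw [complexity, complexity, Nat.card_congr e.toEquiv, Nat.card_congr eCompl.mapEdgeSet]

lemma complexity_lt_of_card_lt {W : Type*} {K : SimpleGraph W} (h : Nat.card W < Nat.card V) :
    complexity K < complexity G :=
  Prod.Lex.toLex_lt_toLex.2 (.inl h)

lemma complexity_lt_of_lt [Finite V] {G₁ G₂ : SimpleGraph V} (h : G₁ < G₂) :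
    complexity G₂ < complexity G₁ := by
  refine Prod.Lex.toLex_lt_toLex.2 (.inr ⟨rfl, ?_⟩)
  simp only [Nat.card_coe_set_eq]
  exact Set.ncard_lt_ncard (edgeSet_ssubset_edgeSet.2 (compl_lt_compl_iff_lt.2 h))
    (Set.toFinite _)

lemma card_le_of_complexity_lt {W : Type*} {K : SimpleGraph W} (h : complexity K < complexity G) :
    Nat.card W ≤ Nat.card V := by
  rcases Prod.Lex.toLex_lt_toLex.1 h with h | ⟨h, -⟩ <;> exact h.le

lemma Pattern.Glues.complexity_quotGraph_lt [Finite α] [Finite γ] {P : Pattern (α ⊕ γ)}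
    (hP : P.Glues A B) (hne : P ≠ patternOf (A ⊕g B) id) :
    complexity P.quotGraph < complexity (A ⊕g B) := by
  rcases (Nat.card_le_card_of_surjective _ (Quotient.mk_surjective (s := P.rel))).lt_or_eq
    with hlt | heq
  · exact complexity_lt_of_card_lt hlt
  have hinj : Injective (Quotient.mk P.rel) :=
    ((Nat.bijective_iff_surjective_and_card _).2 ⟨Quotient.mk_surjective, heq.symm⟩).1
  rw [← complexity_congr (P.isoQuotGraph hinj)]
  refine complexity_lt_of_lt (hP.sum_le.lt_of_ne fun hgraph => hne ?_)
  refine Pattern.ext (Setoid.ext fun x y => ?_) hgraph.symm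
  exact ⟨fun h => hinj (Quotient.sound h), fun (h : x = y) => h ▸ P.rel.refl x⟩

lemma exists_iso_sum_of_not_connected [Nonempty V] {K : SimpleGraph V} (h : ¬K.Connected) :
    ∃ s : Set V, s.Nonempty ∧ sᶜ.Nonempty ∧ Nonempty (K.induce s ⊕g K.induce sᶜ ≃g K) := by
  classical
  obtain ⟨u, v, huv⟩ : ∃ u v, ¬K.Reachable u v := by
    simpa [connected_iff, Preconnected] using h
  let s := {w | K.Reachable u w}
  refine ⟨s, ⟨u, .rfl⟩, ⟨v, huv⟩, ⟨⟨Equiv.Set.sumCompl s, ?_⟩⟩⟩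
  have hcross {x y} (hx : x ∈ s) (hy : y ∉ s) : ¬K.Adj x y :=
    fun hxy => hy (hx.trans hxy.reachable)
  rintro (⟨x, hx⟩ | ⟨x, hx⟩) (⟨y, hy⟩ | ⟨y, hy⟩)
  · exact Iff.rfl
  · simpa using hcross hx hy
  · simpa [adj_comm] using hcross hy hx
  · exact Iff.rfl

universe u

variable {β₁ β₂ : Type*} [Finite β₁] [Finite β₂] {X₁ : SimpleGraph β₁} {X₂ : SimpleGraph β₂}

theorem card_embedding_sum_eq_of_forall_complexity_lt {α γ : Type u} [Finite α] [Finite γ]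
    [Nonempty α] [Nonempty γ] {A : SimpleGraph α} {B : SimpleGraph γ}
    (ih : ∀ {W : Type u} [Finite W] (K : SimpleGraph W), complexity K < complexity (A ⊕g B) →
      Nat.card (K ↪g X₁) = Nat.card (K ↪g X₂)) :
    Nat.card (A ⊕g B ↪g X₁) = Nat.card (A ⊕g B ↪g X₂) := by
  classical
  let _ : Fintype {P : Pattern (α ⊕ γ) // P.Glues A B} := .ofFinite _
  let base : {P : Pattern (α ⊕ γ) // P.Glues A B} :=
    ⟨patternOf (A ⊕g B) id, glues_patternOf_id⟩
  have h₁ := card_embedding_mul_card_embedding A B X₁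
  have h₂ := card_embedding_mul_card_embedding A B X₂
  rw [Nat.card_sigma, ← Finset.add_sum_erase _ _ (Finset.mem_univ base)] at h₁ h₂
  have hA : Nat.card (A ↪g X₁) = Nat.card (A ↪g X₂) :=
    ih A (complexity_lt_of_card_lt (by simp [Nat.card_sum, Nat.card_pos]))
  have hB : Nat.card (B ↪g X₁) = Nat.card (B ↪g X₂) :=
    ih B (complexity_lt_of_card_lt (by simp [Nat.card_sum, Nat.card_pos]))
  have hrest : ∑ P ∈ Finset.univ.erase base, Nat.card (P.1.quotGraph ↪g X₁) =
      ∑ P ∈ Finset.univ.erase base, Nat.card (P.1.quotGraph ↪g X₂) :=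
    Finset.sum_congr rfl fun P hP => ih _ <|
      P.2.complexity_quotGraph_lt fun h => Finset.ne_of_mem_erase hP (Subtype.ext h)
  have hbase := base.1.isoQuotGraph fun _ _ h => Quotient.exact h
  rw [hA, hB, hrest, ← card_embedding_congr_left hbase] at h₁
  rw [← card_embedding_congr_left hbase] at h₂
  exact Nat.add_right_cancel (h₁.symm.trans h₂)

theorem card_embedding_eq_of_forall_connected (n : ℕ)
    (h : ∀ {V : Type u} [Finite V] (K : SimpleGraph V), K.Connected → Nat.card V ≤ n →
      Nat.card (K ↪g X₁) = Nat.card (K ↪g X₂))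
    {V : Type u} [Finite V] (K : SimpleGraph V) (hV : Nat.card V ≤ n) :
    Nat.card (K ↪g X₁) = Nat.card (K ↪g X₂) := by
  induction hc : complexity K using WellFoundedLT.induction generalizing V with
  | ind c ih =>
    subst hc
    rcases isEmpty_or_nonempty V with _ | _
    · rw [card_embedding_of_isEmpty, card_embedding_of_isEmpty]
    by_cases hK : K.Connected
    · exact h K hK hV
    obtain ⟨s, hs, hsc, ⟨e⟩⟩ := exists_iso_sum_of_not_connected hK
    have := hs.to_subtype
    have := hsc.to_subtype
    rw [← card_embedding_congr_left e, ← card_embedding_congr_left e]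
    refine card_embedding_sum_eq_of_forall_complexity_lt fun K' hK' => ?_
    rw [complexity_congr e] at hK'
    exact ih _ hK' K' ((card_le_of_complexity_lt hK').trans hV) rfl

end SimpleGraph

lemma piHG_eq_iff_card_embedding_eq {V₁ V₂ W : Type*} [Finite V₁] [Finite V₂] [Finite W]
    (G₁ : SimpleGraph V₁) (G₂ : SimpleGraph V₂) (H : SimpleGraph W) (k : ℕ) :
    piHG G₁ H k = piHG G₂ H k ↔
      Nat.card (H ↪g colGraph G₁ k) = Nat.card (H ↪g colGraph G₂ k) := by
  have : Nonempty (H ≃g H) := ⟨Iso.refl⟩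
  rw [card_embedding_eq_card_aut_mul_card_induce, card_embedding_eq_card_aut_mul_card_induce,
    Nat.mul_left_cancel_iff Nat.card_pos]
  rfl

/-- For every graph `H` there is a finite collection of connected graphs whose generalised
chromatic polynomials determine `π_G^(H)`. -/
theorem connected_family_determines {W : Type*} [Fintype W] (H : SimpleGraph W) :
    ∃ (s : ℕ) (m : Fin s → ℕ) (F : ∀ i, SimpleGraph (Fin (m i))),
      (∀ i, (F i).Connected) ∧
      ∀ (U₁ U₂ : Type*) [Fintype U₁] [Fintype U₂]
        (G₁ : SimpleGraph U₁) (G₂ : SimpleGraph U₂),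
        (∀ i (k : ℕ), piHG G₁ (F i) k = piHG G₂ (F i) k) →
        ∀ k : ℕ, piHG G₁ H k = piHG G₂ H k := by
  let T := Σ t : Fin (Nat.card W + 1), {K : SimpleGraph (Fin t) // K.Connected}
  let e := (Finite.equivFin T).symm
  refine ⟨Nat.card T, fun i => (e i).1, fun i => (e i).2.1, fun i => (e i).2.2, ?_⟩
  intro U₁ U₂ _ _ G₁ G₂ hF k
  have hT (K : T) : piHG G₁ K.2.1 k = piHG G₂ K.2.1 k := by
    rw [← e.apply_symm_apply K]
    exact hF _ k
  rw [piHG_eq_iff_card_embedding_eq]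
  refine card_embedding_eq_of_forall_connected (Nat.card W) (fun {V} _ K hK hV => ?_) H le_rfl
  let eV : K.comap (Finite.equivFin V).symm ≃g K := ⟨(Finite.equivFin V).symm, Iff.rfl⟩
  rw [← card_embedding_congr_left eV, ← card_embedding_congr_left eV,
    ← piHG_eq_iff_card_embedding_eq]
  exact hT ⟨⟨Nat.card V, Nat.lt_succ_of_le hV⟩, _, eV.connected_iff.2 hK⟩
end
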